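/- Let p̄ ∈ ℝ^n_{>0} be a price at which every good 1,…,n is demanded by some bidder. Then the set P = { p ∈ ℝ^n : G^b(p) ⊇ G^b(p̄) for all b ∈ 𝓑, and p_i ≥ p̄_i/2 for all i } is convex and compact; moreover P is closed under coordinate-wise maximum, i.e., if p¹, p² ∈ P then their coordinate-wise maximum also lies in P. -/
import Mathlib


open Finset

def extOne (n : ℕ) (v : Fin n → ℝ) : Fin (n + 1) → ℝ := Fin.cases 1 v

/-- The goods (including the dummy good `0`) demanded by bid `b` at prices `p`. -/
def demandedGoods (n : ℕ) (b p : Fin n → ℝ) : Set (Fin (n + 1)) :=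
  {i | ∀ j, extOne n b i * extOne n p j ≥ extOne n b j * extOne n p i}

/-- The set `P` of not-too-small prices at which every bidder demands a superset
of the goods demanded at `p̄`. -/
def polytopeP (n : ℕ) (B : Finset (Fin n → ℝ)) (pbar : Fin n → ℝ) : Set (Fin n → ℝ) :=
  {p | (∀ b ∈ B, ∀ i : Fin (n + 1),
      i ∈ demandedGoods n b pbar → i ∈ demandedGoods n b p) ∧
    ∀ i, pbar i / 2 ≤ p i}

lemma extOne_zero (n : ℕ) (v : Fin n → ℝ) : extOne n v 0 = 1 := rfl

lemma extOne_succ (n : ℕ) (v : Fin n → ℝ) (i : Fin n) : extOne n v i.succ = v i := by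
  simp [extOne]

lemma extOne_nonneg (n : ℕ) (v : Fin n → ℝ) (hv : ∀ i, 0 ≤ v i) (j : Fin (n + 1)) :
    0 ≤ extOne n v j := by
  induction j using Fin.cases with
  | zero => norm_num [extOne]
  | succ i => simpa [extOne] using hv i

lemma extOne_comb (n : ℕ) (p q : Fin n → ℝ) (a b : ℝ) (hab : a + b = 1) (j : Fin (n + 1)) :
    extOne n (a • p + b • q) j = a * extOne n p j + b * extOne n q j := by
  induction j using Fin.cases with
  | zero => simp [extOne]; linarith
  | succ i => simp [extOne]

lemma extOne_max (n : ℕ) (p q : Fin n → ℝ) (j : Fin (n + 1)) :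
    extOne n (fun i => max (p i) (q i)) j = max (extOne n p j) (extOne n q j) := by
  induction j using Fin.cases with
  | zero => simp [extOne]
  | succ i => simp [extOne]

lemma extOne_continuous (n : ℕ) (j : Fin (n + 1)) :
    Continuous fun p : Fin n → ℝ => extOne n p j := by
  induction j using Fin.cases with
  | zero => simpa [extOne] using continuous_const
  | succ i =>
      have : (fun p : Fin n → ℝ => extOne n p i.succ) = fun p => p i := by
        funext p; simp [extOne]
      rw [this]; exact continuous_apply i

theorem stmt7 (n : ℕ) (hn : 1 ≤ n) (B : Finset (Fin n → ℝ))
    (hbnn : ∀ b ∈ B, ∀ i, 0 ≤ b i) (hgood : ∀ i : Fin n, ∃ b ∈ B, 0 < b i)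
    (pbar : Fin n → ℝ) (hpbar : ∀ i, 0 < pbar i)
    (hdem : ∀ i : Fin n, ∃ b ∈ B, i.succ ∈ demandedGoods n b pbar) :
    Convex ℝ (polytopeP n B pbar) ∧ IsCompact (polytopeP n B pbar) ∧
      ∀ p₁ ∈ polytopeP n B pbar, ∀ p₂ ∈ polytopeP n B pbar,
        (fun i => max (p₁ i) (p₂ i)) ∈ polytopeP n B pbar := by
  refine ⟨?_, ?_, ?_⟩
  · -- convexity
    intro p hp q hq a b ha hb hab
    refine ⟨?_, ?_⟩
    · intro b' hb' i hi j
      have h1 := hp.1 b' hb' i hi j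
      have h2 := hq.1 b' hb' i hi j
      rw [extOne_comb n p q a b hab i, extOne_comb n p q a b hab j]
      have := mul_le_mul_of_nonneg_left h1 ha
      have := mul_le_mul_of_nonneg_left h2 hb
      nlinarith
    · intro i
      have h1 := hp.2 i
      have h2 := hq.2 i
      have : (a • p + b • q) i = a * p i + b * q i := by simp
      rw [this]
      have e : a * (pbar i / 2) + b * (pbar i / 2) = pbar i / 2 := by
        rw [← add_mul, hab, one_mul]
      linarith [mul_le_mul_of_nonneg_left h1 ha, mul_le_mul_of_nonneg_left h2 hb]
  · -- compactness
    have hclosed : IsClosed (polytopeP n B pbar) := by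
      have heq : polytopeP n B pbar =
          (⋂ b ∈ B, ⋂ i : Fin (n + 1), ⋂ j : Fin (n + 1),
            {p : Fin n → ℝ | i ∈ demandedGoods n b pbar →
              extOne n b j * extOne n p i ≤ extOne n b i * extOne n p j}) ∩
          ⋂ i : Fin n, {p : Fin n → ℝ | pbar i / 2 ≤ p i} := by
        ext p
        simp only [polytopeP, demandedGoods, Set.mem_setOf_eq, Set.mem_inter_iff,
          Set.mem_iInter]
        constructor
        · rintro ⟨h1, h2⟩
          exact ⟨fun b hb i j hi => h1 b hb i hi j, h2⟩
        · rintro ⟨h1, h2⟩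
          exact ⟨fun b hb i hi j => h1 b hb i j hi, h2⟩
      rw [heq]
      apply IsClosed.inter
      · refine isClosed_biInter fun b hb => isClosed_iInter fun i => isClosed_iInter fun j => ?_
        by_cases hdd : i ∈ demandedGoods n b pbar
        · simp only [hdd, true_implies]
          exact isClosed_le (continuous_const.mul (extOne_continuous n i))
            (continuous_const.mul (extOne_continuous n j))
        · simp [hdd]
      · exact isClosed_iInter fun i => isClosed_le continuous_const (continuous_apply i)
    have hsub : polytopeP n B pbar ⊆
        Set.pi Set.univ fun i : Fin n => Set.Icc (pbar i / 2) ((hdem i).choose i) := by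
      intro p hp i _
      refine ⟨hp.2 i, ?_⟩
      obtain ⟨hbB, hid⟩ := (hdem i).choose_spec
      have := hp.1 _ hbB i.succ hid 0
      simpa [extOne_zero, extOne_succ] using this
    exact IsCompact.of_isClosed_subset
      (isCompact_univ_pi fun i => isCompact_Icc) hclosed hsub
  · -- max closure
    intro p₁ hp₁ p₂ hp₂
    refine ⟨?_, ?_⟩
    · intro b hb i hi j
      have h1 := hp₁.1 b hb i hi j
      have h2 := hp₂.1 b hb i hi j
      have hbi : 0 ≤ extOne n b i := extOne_nonneg n b (hbnn b hb) i
      have hbj : 0 ≤ extOne n b j := extOne_nonneg n b (hbnn b hb) j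
      rw [ge_iff_le, extOne_max, extOne_max]
      rcases max_cases (extOne n p₁ i) (extOne n p₂ i) with ⟨he, _⟩ | ⟨he, _⟩ <;> rw [he]
      · calc extOne n b j * extOne n p₁ i ≤ extOne n b i * extOne n p₁ j := h1
          _ ≤ extOne n b i * max (extOne n p₁ j) (extOne n p₂ j) :=
            mul_le_mul_of_nonneg_left (le_max_left _ _) hbi
      · calc extOne n b j * extOne n p₂ i ≤ extOne n b i * extOne n p₂ j := h2
          _ ≤ extOne n b i * max (extOne n p₁ j) (extOne n p₂ j) :=
            mul_le_mul_of_nonneg_left (le_max_right _ _) hbi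
    · intro i
      exact le_trans (hp₁.2 i) (le_max_left _ _)
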